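/- Let j ≥ 0 and let a = 2^{j+1}r + 1, b = 2^{j+1}s with r, s odd integers, chosen so that [0,2], [a, a+1], [b, b+1] are disjoint. Then the set {0, 1, a, b} tiles ℤ, and consequently Ω₄ = [0,2] ∪ [a, a+1] ∪ [b, b+1] tiles ℝ by translations. -/
import Mathlib


open MeasureTheory

/-- A finite set of integers tiles `ℤ` by translations. -/
def TilesZ (A : Finset ℤ) : Prop :=
  ∃ T : Set ℤ, ∀ n : ℤ, ∃! q : ℤ × ℤ, q.1 ∈ A ∧ q.2 ∈ T ∧ q.1 + q.2 = n

/-- `Ω` tiles `ℝ` by translations: some translation set `T` makes the translates of `Ω`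
a partition of `ℝ` up to measure zero. -/
def TilesR (Ω : Set ℝ) : Prop :=
  ∃ T : Set ℝ, ∀ᵐ x : ℝ ∂volume, ∃! t, t ∈ T ∧ x - t ∈ Ω

theorem stmt17 (j : ℕ) (r s a b : ℤ) (hr : Odd r) (hs : Odd s)
    (ha : a = 2 ^ (j + 1) * r + 1) (hb : b = 2 ^ (j + 1) * s)
    (hd1 : Disjoint (Set.Icc (0 : ℝ) 2) (Set.Icc (a : ℝ) (a + 1)))
    (hd2 : Disjoint (Set.Icc (0 : ℝ) 2) (Set.Icc (b : ℝ) (b + 1)))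
    (hd3 : Disjoint (Set.Icc (a : ℝ) (a + 1)) (Set.Icc (b : ℝ) (b + 1))) :
    TilesZ {0, 1, a, b} ∧
      TilesR (Set.Icc (0 : ℝ) 2 ∪ Set.Icc (a : ℝ) (a + 1) ∪ Set.Icc (b : ℝ) (b + 1)) := by
  have hZ : TilesZ {0, 1, a, b} := by
    obtain ⟨k, hk⟩ := hr
    obtain ⟨l, hl⟩ := hs
    set m : ℤ := 2 ^ (j + 1) with hm_def
    have h1 : (0:ℤ) < 2 ^ j := by positivity
    have hm2 : 2 ≤ m := by rw [hm_def, pow_succ]; nlinarith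
    obtain ⟨m', hm'⟩ : (2:ℤ) ∣ m := dvd_pow_self 2 (Nat.succ_ne_zero j)
    have haa : a = (m + 1) + 2*m*k := by rw [ha, hk]; ring
    have hbb : b = m + 2*m*l := by rw [hb, hl]; ring
    refine ⟨{t : ℤ | t % 2 = 0 ∧ t % (2*m) < m}, fun n => ?_⟩
    obtain ⟨q, u, hnu, hu0, hu2⟩ : ∃ q u : ℤ, 2*m*q + u = n ∧ 0 ≤ u ∧ u < 2*m :=
      ⟨n / (2*m), n % (2*m), Int.mul_ediv_add_emod n (2*m), Int.emod_nonneg n (by omega),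
        Int.emod_lt_of_pos n (by omega)⟩
    have hres : ∀ α c k' : ℤ, α = c + 2*m*k' → 0 ≤ c → -(2*m) ≤ u - c →
        (n - α) % (2*m) = if 0 ≤ u - c then u - c else u - c + 2*m := by
      intro α c k' hα hc0 hlb
      subst hα
      have e : n - (c + 2*m*k') = (u - c) + 2*m*(q - k') := by rw [← hnu]; ring
      rw [e, Int.add_mul_emod_self_left]
      split_ifs with h
      · exact Int.emod_eq_of_lt h (by omega)
      · have h2 := Int.add_mul_emod_self_left (a := u - c + 2*m) (b := 2*m) (c := -1)
        have e3 : u - c + 2*m + 2*m*(-1) = u - c := by ring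
        rw [e3] at h2
        rw [h2]
        exact Int.emod_eq_of_lt (by omega) (by omega)
    have hpar : ∀ α c k' : ℤ, α = c + 2*m*k' → (n - α) % 2 = (u - c) % 2 := by
      intro α c k' hα
      subst hα
      have e : n - (c + 2*m*k') = (u - c) + 2*(m*(q - k')) := by rw [← hnu]; ring
      rw [e, Int.add_mul_emod_self_left]
    have P0 : ((n - 0) % 2 = 0 ∧ (n - 0) % (2*m) < m) ↔ (u % 2 = 0 ∧ u < m) := by
      rw [hpar 0 0 0 (by ring), hres 0 0 0 (by ring) le_rfl (by omega)]
      split_ifs with h <;> omega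
    have P1 : ((n - 1) % 2 = 0 ∧ (n - 1) % (2*m) < m) ↔ (u % 2 = 1 ∧ u < m) := by
      rw [hpar 1 1 0 (by ring), hres 1 1 0 (by ring) (by omega) (by omega)]
      split_ifs with h <;> omega
    have Pa : ((n - a) % 2 = 0 ∧ (n - a) % (2*m) < m) ↔ (u % 2 = 1 ∧ m < u) := by
      rw [hpar a (m+1) k haa, hres a (m+1) k haa (by omega) (by omega)]
      split_ifs with h <;> omega
    have Pb : ((n - b) % 2 = 0 ∧ (n - b) % (2*m) < m) ↔ (u % 2 = 0 ∧ m ≤ u) := by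
      rw [hpar b m l hbb, hres b m l hbb (by omega) (by omega)]
      split_ifs with h <;> omega
    have key : ∃ α : ℤ, (α = 0 ∨ α = 1 ∨ α = a ∨ α = b) ∧
        ((n - α) % 2 = 0 ∧ (n - α) % (2*m) < m) ∧
        ∀ β : ℤ, (β = 0 ∨ β = 1 ∨ β = a ∨ β = b) →
          ((n - β) % 2 = 0 ∧ (n - β) % (2*m) < m) → β = α := by
      by_cases hpu : u % 2 = 0
      · by_cases hum : u < m
        · refine ⟨0, Or.inl rfl, P0.mpr ⟨hpu, hum⟩, ?_⟩
          rintro β (rfl|rfl|rfl|rfl) hPβ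
          · rfl
          · rw [P1] at hPβ; omega
          · rw [Pa] at hPβ; omega
          · rw [Pb] at hPβ; omega
        · refine ⟨b, Or.inr (Or.inr (Or.inr rfl)), Pb.mpr ⟨hpu, by omega⟩, ?_⟩
          rintro β (rfl|rfl|rfl|rfl) hPβ
          · rw [P0] at hPβ; omega
          · rw [P1] at hPβ; omega
          · rw [Pa] at hPβ; omega
          · rfl
      · by_cases hum : u < m
        · refine ⟨1, Or.inr (Or.inl rfl), P1.mpr ⟨by omega, hum⟩, ?_⟩
          rintro β (rfl|rfl|rfl|rfl) hPβ
          · rw [P0] at hPβ; omega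
          · rfl
          · rw [Pa] at hPβ; omega
          · rw [Pb] at hPβ; omega
        · refine ⟨a, Or.inr (Or.inr (Or.inl rfl)), Pa.mpr ⟨by omega, by omega⟩, ?_⟩
          rintro β (rfl|rfl|rfl|rfl) hPβ
          · rw [P0] at hPβ; omega
          · rw [P1] at hPβ; omega
          · rfl
          · rw [Pb] at hPβ; omega
    obtain ⟨α, hαor, hPα, huα⟩ := key
    refine ⟨⟨α, n - α⟩, ⟨?_, hPα, by omega⟩, ?_⟩
    · simp only [Finset.mem_insert, Finset.mem_singleton]; exact hαor
    · rintro ⟨β, t'⟩ ⟨hβ, ht', hsum⟩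
      simp only [Finset.mem_insert, Finset.mem_singleton] at hβ
      simp only [Set.mem_setOf_eq] at ht'
      simp only at hsum
      have ht'' : t' = n - β := by omega
      subst ht''
      have hβα : β = α := huα β hβ ht'
      simp [Prod.ext_iff, hβα]
  refine ⟨hZ, ?_⟩
  obtain ⟨T, hT⟩ := hZ
  refine ⟨(fun z : ℤ => (z:ℝ)) '' T, ?_⟩
  have hnull : ∀ᵐ x : ℝ ∂volume, x ∉ Set.range ((↑) : ℤ → ℝ) := by
    have hc : volume (Set.range ((↑) : ℤ → ℝ)) = 0 :=
      Set.Countable.measure_zero (Set.countable_range _) _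
    exact measure_eq_zero_iff_ae_notMem.mp hc
  filter_upwards [hnull] with x hx
  set n : ℤ := ⌊x⌋ with hn_def
  have hx1 : (n:ℝ) < x := lt_of_le_of_ne (Int.floor_le x) (fun h => hx ⟨n, h⟩)
  have hx2 : x < n + 1 := Int.lt_floor_add_one x
  obtain ⟨⟨α, t⟩, ⟨hαA, htT, hsum⟩, huniq⟩ := hT n
  simp only [Finset.mem_insert, Finset.mem_singleton] at hαA
  simp only at hsum htT
  have hcast : (α:ℝ) + t = n := by exact_mod_cast congrArg (fun z : ℤ => (z:ℝ)) hsum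
  refine ⟨(t:ℝ), ⟨⟨t, htT, rfl⟩, ?_⟩, ?_⟩
  · have h1 : (α:ℝ) < x - t := by linarith
    have h2 : x - t < (α:ℝ) + 1 := by linarith
    rcases hαA with rfl|rfl|rfl|rfl
    · refine Or.inl (Or.inl ?_)
      rw [Set.mem_Icc]
      push_cast at h1 h2
      constructor <;> linarith
    · refine Or.inl (Or.inl ?_)
      rw [Set.mem_Icc]
      push_cast at h1 h2
      constructor <;> linarith
    · refine Or.inl (Or.inr ?_)
      rw [Set.mem_Icc]
      constructor <;> linarith
    · refine Or.inr ?_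
      rw [Set.mem_Icc]
      constructor <;> linarith
  · rintro y ⟨⟨z, hzT, rfl⟩, hyΩ⟩
    suffices hzt : z = t by exact congrArg (fun w : ℤ => (w:ℝ)) hzt
    have hb1 : ((n - z : ℤ):ℝ) < x - z := by push_cast; linarith
    have hb2 : x - (z:ℝ) < ((n - z : ℤ):ℝ) + 1 := by push_cast; linarith
    rcases hyΩ with (h | h) | h
    · rw [Set.mem_Icc] at h
      have c1 : (0:ℝ) < ((n - z : ℤ):ℝ) + 1 := lt_of_le_of_lt h.1 hb2
      have c2 : ((n - z : ℤ):ℝ) < 2 := lt_of_lt_of_le hb1 h.2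
      have c1' : (0:ℤ) < (n - z) + 1 := by exact_mod_cast c1
      have c2' : (n - z : ℤ) < 2 := by exact_mod_cast c2
      have hd : n - z = 0 ∨ n - z = 1 := by omega
      rcases hd with hd | hd
      · have := huniq (0, z) ⟨by simp, hzT, by omega⟩
        exact (Prod.ext_iff.mp this).2
      · have := huniq (1, z) ⟨by simp, hzT, by omega⟩
        exact (Prod.ext_iff.mp this).2
    · rw [Set.mem_Icc] at h
      have c1 : ((a:ℤ):ℝ) < ((n - z : ℤ):ℝ) + 1 := lt_of_le_of_lt h.1 hb2
      have c2 : ((n - z : ℤ):ℝ) < (a:ℝ) + 1 := lt_of_lt_of_le hb1 h.2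
      have c1' : (a:ℤ) < (n - z) + 1 := by exact_mod_cast c1
      have c2' : (n - z : ℤ) < a + 1 := by exact_mod_cast c2
      have := huniq (a, z) ⟨by simp, hzT, by omega⟩
      exact (Prod.ext_iff.mp this).2
    · rw [Set.mem_Icc] at h
      have c1 : ((b:ℤ):ℝ) < ((n - z : ℤ):ℝ) + 1 := lt_of_le_of_lt h.1 hb2
      have c2 : ((n - z : ℤ):ℝ) < (b:ℝ) + 1 := lt_of_lt_of_le hb1 h.2
      have c1' : (b:ℤ) < (n - z) + 1 := by exact_mod_cast c1
      have c2' : (n - z : ℤ) < b + 1 := by exact_mod_cast c2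
      have := huniq (b, z) ⟨by simp, hzT, by omega⟩
      exact (Prod.ext_iff.mp this).2
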